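/- Let (X,d) be a metric space, x₀ ∈ X, and for u ∈ X and a triple (a,a',s) with a,a' ∈ X and s ∈ [-⟨a'|x₀⟩_a, ⟨a|x₀⟩_{a'}], define ℓ(u,(a,a',s)) := ⟨a|a'⟩_u + |s - ⟨a,a'|u,x₀⟩|. Then for each fixed (a,a',s), the function u ↦ ℓ(u,(a,a',s)) is 2-Lipschitz in u. -/
import Mathlib

/-- The double difference in a metric space. -/
noncomputable def doubleDiff {X : Type*} [MetricSpace X] (a a' b b' : X) : ℝ :=
  (dist a b - dist a' b - dist a b' + dist a' b') / 2

/-- The Gromov product ⟨a|b⟩_c in a metric space. -/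
noncomputable def gromovProd {X : Type*} [MetricSpace X] (a b c : X) : ℝ :=
  (dist a c + dist b c - dist a b) / 2

/-- ℓ(u,(a,a',s)) := ⟨a|a'⟩_u + |s - ⟨a,a'|u,x₀⟩|. -/
noncomputable def ellFun {X : Type*} [MetricSpace X] (x₀ : X)
    (u : X) (a a' : X) (s : ℝ) : ℝ :=
  gromovProd a a' u + |s - doubleDiff a a' u x₀|

theorem ellFun_lipschitz {X : Type*} [MetricSpace X] (x₀ a a' : X) (s : ℝ)
    (hs : s ∈ Set.Icc (-(gromovProd a' x₀ a)) (gromovProd a x₀ a'))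
    (u v : X) :
    |ellFun x₀ u a a' s - ellFun x₀ v a a' s| ≤ 2 * dist u v := by
  have t1 := abs_dist_sub_le u v a
  have t2 := abs_dist_sub_le u v a'
  rw [abs_le] at t1 t2
  have h1 : |gromovProd a a' u - gromovProd a a' v| ≤ dist u v := by
    rw [abs_le]
    unfold gromovProd
    rw [dist_comm a u, dist_comm a' u, dist_comm a v, dist_comm a' v] 
    constructor <;> [linarith [t1.1, t2.1]; linarith [t1.2, t2.2]]
  have h2 : |doubleDiff a a' u x₀ - doubleDiff a a' v x₀| ≤ dist u v := by
    rw [abs_le]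
    unfold doubleDiff
    rw [dist_comm a u, dist_comm a' u, dist_comm a v, dist_comm a' v]
    constructor <;> [linarith [t1.1, t2.2]; linarith [t1.2, t2.1]]
  set gu := gromovProd a a' u
  set gv := gromovProd a a' v
  set du := doubleDiff a a' u x₀
  set dv := doubleDiff a a' v x₀
  have h3 : |(|s - du| - |s - dv|)| ≤ |du - dv| := by
    have := abs_abs_sub_abs_le_abs_sub (s - du) (s - dv)
    simpa [abs_sub_comm] using this
  unfold ellFun
  have h4 : |gu + |s - du| - (gv + |s - dv|)| ≤ |gu - gv| + |(|s - du| - |s - dv|)| := by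
    have := abs_add_le (gu - gv) (|s - du| - |s - dv|)
    have e : gu + |s - du| - (gv + |s - dv|) = (gu - gv) + (|s - du| - |s - dv|) := by ring
    rw [e]; exact this
  calc |gu + |s - du| - (gv + |s - dv|)| ≤ |gu - gv| + |(|s - du| - |s - dv|)| := h4
    _ ≤ dist u v + dist u v := add_le_add h1 (h3.trans h2)
    _ = 2 * dist u v := by ring
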